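/- Let f(x,y,u,z,w) = −w³xy − 2u²w²z + w²x²z + w²y²z − wxyz² + u²z³, and let G be the subset of ℙ(ℂ³) × ℙ(ℂ²) × ℙ(ℂ²) × ℙ(ℂ²) consisting of all points ([x:y:u], [z:w], [x:y], [z:w]) with f(x,y,u,z,w) = 0 and (x,y) ≠ (0,0) (the graph of φ: [x:y:u:z:w] ↦ [x:y:z:w] on its domain of definition). Then for every (a,b) ∈ ℂ² with (a,b) ≠ (0,0), the point ([0:0:1], [0:1], [a:b], [0:1]) lies in the topological closure of G. -/

import Mathlib

/-!
Approach the fundamental point inside the fibre `[x:y] = [a:b]`, with `w = 1`, `z = s → 0` and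
`u → ∞`; then `[a:b:u] → [0:0:1]` and `[s:1] → [0:1]`, while the third coordinate stays
`[a:b]`.
On this chart `f(a, b, u, s, 1) = u² s (s² - 2) - (ab (1 + s²) - s (a² + b²))`.
If `ab ≠ 0`, solving for `u²` gives `u² ~ -ab / (2s)`, which indeed blows up as `s → 0`.
If `ab = 0`, then `f(a, b, u, 0, 1) = -ab = 0` for every `u`, so `s = 0` works.
-/

open Projectivization
open scoped LinearAlgebra.Projectivization

/-- The quotient topology on a projectivization, induced from the subspace of
nonzero vectors. -/
noncomputable instance (n : ℕ) : TopologicalSpace (ℙ ℂ (Fin n → ℂ)) :=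
  inferInstanceAs (TopologicalSpace (Quotient (projectivizationSetoid ℂ (Fin n → ℂ))))

/-- The defining polynomial of the projective model `S` of the canonical component. -/
def whiteheadProjF (x y u z w : ℂ) : ℂ :=
  -w^3*x*y - 2*u^2*w^2*z + w^2*x^2*z + w^2*y^2*z - w*x*y*z^2 + u^2*z^3

/-- The graph of `φ : [x:y:u:z:w] ↦ [x:y:z:w]` on its domain of definition
`{(x,y) ≠ (0,0)}`, inside `ℙ(ℂ³) × ℙ(ℂ²) × ℙ(ℂ²) × ℙ(ℂ²)`. -/
def whiteheadGraph :
    Set (ℙ ℂ (Fin 3 → ℂ) × ℙ ℂ (Fin 2 → ℂ) × ℙ ℂ (Fin 2 → ℂ) × ℙ ℂ (Fin 2 → ℂ)) :=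
  {p | ∃ (x y u z w : ℂ) (h₁ : ![x, y, u] ≠ 0) (h₂ : ![z, w] ≠ 0) (h₃ : ![x, y] ≠ 0),
    whiteheadProjF x y u z w = 0 ∧ (x, y) ≠ (0, 0) ∧
    p = (Projectivization.mk ℂ ![x, y, u] h₁, Projectivization.mk ℂ ![z, w] h₂,
         Projectivization.mk ℂ ![x, y] h₃, Projectivization.mk ℂ ![z, w] h₂)}

open Filter Topology Bornology

section Cobounded

variable {𝕜 ι : Type*} [NormedField 𝕜] {l : Filter ι} {f g : ι → 𝕜}

lemma Filter.Tendsto.cobounded_mul_of_ne_zero {c : 𝕜} (hf : Tendsto f l (cobounded 𝕜))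
    (hg : Tendsto g l (𝓝 c)) (hc : c ≠ 0) :
    Tendsto (fun i => f i * g i) l (cobounded 𝕜) := by
  rw [← tendsto_norm_atTop_iff_cobounded] at hf ⊢
  simpa only [norm_mul] using hf.atTop_mul_pos (norm_pos_iff.2 hc) hg.norm

lemma Filter.Tendsto.cobounded_of_sq (h : Tendsto (fun i => f i ^ 2) l (cobounded 𝕜)) :
    Tendsto f l (cobounded 𝕜) := by
  rw [← tendsto_norm_atTop_iff_cobounded] at h ⊢
  simpa only [Function.comp_def, norm_pow, Real.sqrt_sq (norm_nonneg _)] using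
    Real.tendsto_sqrt_atTop.comp h

end Cobounded

section Projective

variable {ι : Type*} {l : Filter ι}

lemma Projectivization.tendsto_mk {n : ℕ} {f : ι → Fin n → ℂ} (hf : ∀ i, f i ≠ 0)
    {v : Fin n → ℂ} (hv : v ≠ 0) (h : Tendsto f l (𝓝 v)) :
    Tendsto (fun i => mk ℂ (f i) (hf i)) l (𝓝 (mk ℂ v hv)) :=
  (continuous_quotient_mk'.tendsto _).comp (tendsto_subtype_rng.2 h)

lemma Projectivization.tendsto_mk_pair_of_tendsto_zero {s : ι → ℂ}
    (hs : Tendsto s l (𝓝 0)) :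
    Tendsto (fun i => mk ℂ ![s i, 1] (by simp)) l (𝓝 (mk ℂ ![0, 1] (by simp))) := by
  refine tendsto_mk _ _ ?_
  have hcont : Continuous fun t : ℂ => ![t, 1] := by fun_prop
  simpa [Function.comp_def] using (hcont.tendsto 0).comp hs

lemma Projectivization.tendsto_mk_triple_of_tendsto_cobounded (a b : ℂ) {u : ι → ℂ}
    (hu : Tendsto u l (cobounded ℂ)) (h : ∀ i, ![a, b, u i] ≠ 0) :
    Tendsto (fun i => mk ℂ ![a, b, u i] (h i)) l (𝓝 (mk ℂ ![0, 0, 1] (by simp))) := by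
  have hscaled : Tendsto (fun i => mk ℂ ![a * (u i)⁻¹, b * (u i)⁻¹, 1] (by simp)) l
      (𝓝 (mk ℂ ![0, 0, 1] (by simp))) := by
    refine tendsto_mk _ _ ?_
    have hcont : Continuous fun t : ℂ => ![a * t, b * t, 1] := by fun_prop
    simpa [Function.comp_def] using (hcont.tendsto 0).comp (tendsto_inv₀_cobounded.comp hu)
  refine hscaled.congr' ?_
  filter_upwards [hu.eventually_ne_cobounded 0] with i hi
  rw [mk_eq_mk_iff']
  exact ⟨(u i)⁻¹, by simp [hi, mul_comm]⟩

end Projective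

lemma whiteheadProjF_w_eq_one (x y u z : ℂ) :
    whiteheadProjF x y u z 1 =
      u ^ 2 * (z * (z ^ 2 - 2)) - (x * y * (1 + z ^ 2) - z * (x ^ 2 + y ^ 2)) := by
  simp only [whiteheadProjF]
  ring

lemma mk_mem_whiteheadGraph {a b u s : ℂ} (hab : (a, b) ≠ (0, 0))
    (hf : whiteheadProjF a b u s 1 = 0) (h₁ : ![a, b, u] ≠ 0) (h₂ : ![s, 1] ≠ 0)
    (h₃ : ![a, b] ≠ 0) :
    (mk ℂ ![a, b, u] h₁, mk ℂ ![s, 1] h₂, mk ℂ ![a, b] h₃, mk ℂ ![s, 1] h₂) ∈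
      whiteheadGraph :=
  ⟨a, b, u, s, 1, h₁, h₂, h₃, hf, hab, rfl⟩

lemma mem_closure_whiteheadGraph_of_tendsto {ι : Type*} {l : Filter ι} [l.NeBot] {a b : ℂ}
    (hab : (a, b) ≠ (0, 0)) {u s : ι → ℂ} (hu : Tendsto u l (cobounded ℂ))
    (hs : Tendsto s l (𝓝 0)) (hf : ∀ᶠ i in l, whiteheadProjF a b (u i) (s i) 1 = 0) :
    (mk ℂ ![(0 : ℂ), 0, 1] (by simp), mk ℂ ![(0 : ℂ), 1] (by simp),
      mk ℂ ![a, b] (by simpa [Prod.ext_iff] using hab), mk ℂ ![(0 : ℂ), 1] (by simp)) ∈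
      closure whiteheadGraph := by
  have h₁ : ∀ i, ![a, b, u i] ≠ 0 := fun i => by simp_all [Prod.ext_iff]
  have hpair := tendsto_mk_pair_of_tendsto_zero hs
  refine mem_closure_of_tendsto ((tendsto_mk_triple_of_tendsto_cobounded a b hu h₁).prodMk_nhds
    (hpair.prodMk_nhds (tendsto_const_nhds.prodMk_nhds hpair))) ?_
  filter_upwards [hf] with i hi
  exact mk_mem_whiteheadGraph hab hi _ _ _

lemma exists_tendsto_cobounded_whiteheadProjF_eq_zero {a b : ℂ} (hab : a * b ≠ 0) :
    ∃ u : ℂ → ℂ, Tendsto u (𝓝[≠] 0) (cobounded ℂ) ∧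
      ∀ᶠ s in 𝓝[≠] 0, whiteheadProjF a b (u s) s 1 = 0 := by
  set g : ℂ → ℂ := fun s => (a * b * (1 + s ^ 2) - s * (a ^ 2 + b ^ 2)) / (s ^ 2 - 2)
  have hg : Tendsto g (𝓝[≠] 0) (𝓝 (g 0)) :=
    ((Continuous.continuousAt (by fun_prop)).div (by fun_prop) (by norm_num)).tendsto.mono_left
      nhdsWithin_le_nhds
  have hg0 : g 0 ≠ 0 := by simp [g, hab]
  refine ⟨fun s => (s⁻¹ * g s) ^ (2⁻¹ : ℂ), ?_, ?_⟩
  · refine Tendsto.cobounded_of_sq ?_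
    simpa only [Complex.cpow_ofNat_inv_pow] using
      tendsto_inv₀_nhdsNE_zero.cobounded_mul_of_ne_zero hg hg0
  · have hsq : ∀ᶠ s : ℂ in 𝓝[≠] 0, s ^ 2 - 2 ≠ 0 :=
      (((continuous_pow 2).sub continuous_const).continuousAt.eventually_ne
        (by norm_num)).filter_mono nhdsWithin_le_nhds
    filter_upwards [self_mem_nhdsWithin, hsq] with s (hs : s ≠ 0) hs2
    rw [whiteheadProjF_w_eq_one, Complex.cpow_ofNat_inv_pow]
    simp only [g]
    field_simp
    ring

theorem total_transform_of_fundamental_point (a b : ℂ) (hab : (a, b) ≠ (0, 0)) :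
    (Projectivization.mk ℂ ![(0 : ℂ), 0, 1]
        (by intro h; simpa using congrFun h 2),
     Projectivization.mk ℂ ![(0 : ℂ), 1]
        (by intro h; simpa using congrFun h 1),
     Projectivization.mk ℂ ![a, b]
        (by intro h; apply hab; exact Prod.ext (by simpa using congrFun h 0) (by simpa using congrFun h 1)),
     Projectivization.mk ℂ ![(0 : ℂ), 1]
        (by intro h; simpa using congrFun h 1)) ∈ closure whiteheadGraph := by
  by_cases hab₀ : a * b = 0
  · refine mem_closure_whiteheadGraph_of_tendsto hab tendsto_inv₀_nhdsNE_zero tendsto_const_nhds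
      (Eventually.of_forall fun s => ?_)
    simp [whiteheadProjF_w_eq_one, hab₀]
  · obtain ⟨u, hu, hf⟩ := exists_tendsto_cobounded_whiteheadProjF_eq_zero hab₀
    exact mem_closure_whiteheadGraph_of_tendsto hab hu
      (tendsto_id.mono_left nhdsWithin_le_nhds) hf
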